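/- arXiv:2206.11737 — 6 statements merged into one kernel-verified Lean document; each statement's English description precedes it below -/
import Mathlib

section
/- Consider the second-order ODE u_2 = φ(x,u,u_1) with associated vector field A = ∂_x + u_1∂_u + φ∂_{u_1} on an open subset of ℝ³ with coordinates (x,u,u_1). Let λ = λ(x,u,u_1) be smooth and set X_1 = ∂_u + λ∂_{u_1} and ω_2 = (u_1λ - φ)dx - λdu + du_1. Then ω_2 ∧ dω_2 = 0 if and only if λ satisfies λ_x + λ_u u_1 + λ_{u_1}φ + λ² = φ_u + λφ_{u_1}. -/
noncomputable section

/-- Points `(x, u, u₁)` of the first-order jet space, modelled as ℝ³. -/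
abbrev R3 := ℝ × ℝ × ℝ

/-- Partial derivative with respect to the first coordinate `x`. -/
def pX (f : R3 → ℝ) (p : R3) : ℝ := deriv (fun t => f (t, p.2.1, p.2.2)) p.1

/-- Partial derivative with respect to the second coordinate `u`. -/
def pU (f : R3 → ℝ) (p : R3) : ℝ := deriv (fun t => f (p.1, t, p.2.2)) p.2.1

/-- Partial derivative with respect to the third coordinate `u₁`. -/
def pV (f : R3 → ℝ) (p : R3) : ℝ := deriv (fun t => f (p.1, p.2.1, t)) p.2.2

/-- Lie bracket of vector fields on ℝ³. -/
def lieB (X Y : R3 → R3) : R3 → R3 :=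
  fun p => fderiv ℝ Y p (X p) - fderiv ℝ X p (Y p)

/-- The coefficient of `ω ∧ dω` (with respect to the volume form `dx ∧ du ∧ du₁`) for the
1-form `ω = P dx + Q du + R du₁` on ℝ³. -/
def wedgeDens (P Q R : R3 → ℝ) (p : R3) : ℝ :=
  P p * (pU R p - pV Q p) - Q p * (pX R p - pV P p) + R p * (pX Q p - pU P p)

lemma sliceX_diff {f : R3 → ℝ} {p : R3} (hf : DifferentiableAt ℝ f p) :
    DifferentiableAt ℝ (fun t => f (t, p.2.1, p.2.2)) p.1 := by
  have h : (fun t => f (t, p.2.1, p.2.2)) = f ∘ (fun t : ℝ => (t, p.2.1, p.2.2)) := rfl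
  rw [h]
  exact hf.comp _ (differentiableAt_id.prodMk (differentiableAt_const _))

lemma sliceU_diff {f : R3 → ℝ} {p : R3} (hf : DifferentiableAt ℝ f p) :
    DifferentiableAt ℝ (fun t => f (p.1, t, p.2.2)) p.2.1 := by
  have h : (fun t => f (p.1, t, p.2.2)) = f ∘ (fun t : ℝ => (p.1, t, p.2.2)) := rfl
  rw [h]
  exact hf.comp _ ((differentiableAt_const _).prodMk
    (differentiableAt_id.prodMk (differentiableAt_const _)))

lemma sliceV_diff {f : R3 → ℝ} {p : R3} (hf : DifferentiableAt ℝ f p) :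
    DifferentiableAt ℝ (fun t => f (p.1, p.2.1, t)) p.2.2 := by
  have h : (fun t => f (p.1, p.2.1, t)) = f ∘ (fun t : ℝ => (p.1, p.2.1, t)) := rfl
  rw [h]
  exact hf.comp _ ((differentiableAt_const _).prodMk
    ((differentiableAt_const _).prodMk differentiableAt_id))
/-- for the second-order ODE `u₂ = φ(x,u,u₁)` and a smooth function `λ`, the
1-form `ω₂ = (u₁λ - φ) dx - λ du + du₁` satisfies `ω₂ ∧ dω₂ = 0` on the open set `U` if and
only if `λ` satisfies the determining equation
`λ_x + λ_u u₁ + λ_{u₁} φ + λ² = φ_u + λ φ_{u₁}` on `U`. -/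
theorem frobenius_iff_determining_equation
    (U : Set R3) (hU : IsOpen U)
    (lam φ : R3 → ℝ)
    (hlam : ContDiffOn ℝ (⊤ : ℕ∞) lam U) (hφ : ContDiffOn ℝ (⊤ : ℕ∞) φ U) :
    (∀ p ∈ U, wedgeDens (fun p => p.2.2 * lam p - φ p) (fun p => -(lam p))
        (fun _ => 1) p = 0) ↔
    (∀ p ∈ U, pX lam p + pU lam p * p.2.2 + pV lam p * φ p + (lam p) ^ 2 =
        pU φ p + lam p * pV φ p) := by
  have key : ∀ p ∈ U, wedgeDens (fun p => p.2.2 * lam p - φ p) (fun p => -(lam p))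
      (fun _ => 1) p =
      -(pX lam p + pU lam p * p.2.2 + pV lam p * φ p + (lam p) ^ 2
        - pU φ p - lam p * pV φ p) := by
    intro p hp
    have hlamd : DifferentiableAt ℝ lam p :=
      (hlam.contDiffAt (hU.mem_nhds hp)).differentiableAt (by simp)
    have hφd : DifferentiableAt ℝ φ p :=
      (hφ.contDiffAt (hU.mem_nhds hp)).differentiableAt (by simp)
    have hPV : pV (fun p => p.2.2 * lam p - φ p) p
        = (lam p + p.2.2 * pV lam p) - pV φ p := by
      unfold pV
      rw [show (fun t => (fun p : R3 => p.2.2 * lam p - φ p) (p.1, p.2.1, t))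
            = fun t => t * lam (p.1, p.2.1, t) - φ (p.1, p.2.1, t) from rfl,
          deriv_fun_sub (differentiableAt_fun_id.fun_mul (sliceV_diff hlamd)) (sliceV_diff hφd),
          deriv_fun_mul differentiableAt_fun_id (sliceV_diff hlamd), deriv_id'']
      ring
    have hPU : pU (fun p => p.2.2 * lam p - φ p) p
        = p.2.2 * pU lam p - pU φ p := by
      unfold pU
      rw [show (fun t => (fun p : R3 => p.2.2 * lam p - φ p) (p.1, t, p.2.2))
            = fun t => p.2.2 * lam (p.1, t, p.2.2) - φ (p.1, t, p.2.2) from rfl,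
          deriv_fun_sub ((sliceU_diff hlamd).const_mul _) (sliceU_diff hφd),
          deriv_const_mul _ (sliceU_diff hlamd)]
    have hQX : pX (fun p => -(lam p)) p = -(pX lam p) := by
      unfold pX; exact deriv.neg
    have hQV : pV (fun p => -(lam p)) p = -(pV lam p) := by
      unfold pV; exact deriv.neg
    have hRc : ∀ q : R3, pX (fun _ => (1:ℝ)) q = 0 ∧ pU (fun _ => (1:ℝ)) q = 0 := by
      intro q; constructor <;> simp [pX, pU]
    unfold wedgeDens
    rw [hPV, hPU, hQX, hQV, (hRc p).1, (hRc p).2]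
    simp [pU]
    ring
  constructor
  · intro h p hp
    have := h p hp
    rw [key p hp] at this
    linarith
  · intro h p hp
    rw [key p hp, h p hp]
    ring
end
end

section
/- For a second-order ODE u_2 = φ(x,u,u_1), if λ satisfies the determining equation λ_x + λ_u u_1 + λ_{u_1}φ + λ² = φ_u + λφ_{u_1}, then the vector field X_1 = ∂_u + λ∂_{u_1} satisfies [X_1, A] = λX_1 - (λ_x + u_1λ_u + φλ_{u_1})·∂_{u_1} + (φ_u + λφ_{u_1} - λ²)·∂_{u_1}; in particular [X_1, A] = λX_1, i.e., X_1 is a C∞-symmetry of the distribution S({A}). -/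
noncomputable section

lemma fderiv_apply_eq (f : R3 → ℝ) (p : R3) (hf : DifferentiableAt ℝ f p) (v : R3) :
    fderiv ℝ f p v = pX f p * v.1 + pU f p * v.2.1 + pV f p * v.2.2 := by
  have hx : HasDerivAt (fun t : ℝ => ((t, p.2.1, p.2.2) : R3)) ((1,0,0) : R3) p.1 :=
    (hasDerivAt_id p.1).prodMk (((hasDerivAt_const p.1 p.2.1)).prodMk (hasDerivAt_const p.1 p.2.2))
  have hu : HasDerivAt (fun t : ℝ => ((p.1, t, p.2.2) : R3)) ((0,1,0) : R3) p.2.1 :=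
    (hasDerivAt_const _ _).prodMk ((hasDerivAt_id _).prodMk (hasDerivAt_const _ _))
  have hv : HasDerivAt (fun t : ℝ => ((p.1, p.2.1, t) : R3)) ((0,0,1) : R3) p.2.2 :=
    (hasDerivAt_const _ _).prodMk ((hasDerivAt_const _ _).prodMk (hasDerivAt_id _))
  have hf' := hf.hasFDerivAt
  have e : ((p.1, p.2.1, p.2.2) : R3) = p := by ext <;> rfl
  have hX : pX f p = fderiv ℝ f p (1,0,0) := by
    have := (hf'.comp_hasDerivAt p.1 (e ▸ hx))
    simpa [pX, Function.comp_def] using this.deriv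
  have hU : pU f p = fderiv ℝ f p (0,1,0) := by
    have := (hf'.comp_hasDerivAt p.2.1 (e ▸ hu))
    simpa [pU, Function.comp_def] using this.deriv
  have hV : pV f p = fderiv ℝ f p (0,0,1) := by
    have := (hf'.comp_hasDerivAt p.2.2 (e ▸ hv))
    simpa [pV, Function.comp_def] using this.deriv
  have hvdec : v = v.1 • ((1,0,0):R3) + v.2.1 • ((0,1,0):R3) + v.2.2 • ((0,0,1):R3) := by
    ext <;> simp
  conv_lhs => rw [hvdec]
  simp only [map_add, map_smul, smul_eq_mul]
  rw [← hX, ← hU, ← hV]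
  ring

/-- if `λ` satisfies the determining equation
`λ_x + λ_u u₁ + λ_{u₁} φ + λ² = φ_u + λ φ_{u₁}` on `U`, then `X₁ = ∂_u + λ ∂_{u₁}`
satisfies `[X₁, A] = λX₁ - (λ_x + u₁λ_u + φλ_{u₁})∂_{u₁} + (φ_u + λφ_{u₁} - λ²)∂_{u₁}`;
in particular `[X₁, A] = λX₁`, i.e. `X₁` is a C^∞-symmetry of the distribution `S({A})`,
where `A = ∂_x + u₁ ∂_u + φ ∂_{u₁}`. -/
theorem lambda_prolongation_is_cinf_symmetry
    (U : Set R3) (hU : IsOpen U)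
    (lam φ : R3 → ℝ)
    (hlam : ContDiffOn ℝ (⊤ : ℕ∞) lam U) (hφ : ContDiffOn ℝ (⊤ : ℕ∞) φ U)
    (hdet : ∀ p ∈ U, pX lam p + pU lam p * p.2.2 + pV lam p * φ p + (lam p) ^ 2 =
        pU φ p + lam p * pV φ p) :
    ∀ p ∈ U,
      lieB (fun p => (0, 1, lam p)) (fun p => (1, p.2.2, φ p)) p =
        lam p • ((0, 1, lam p) : R3) +
          (-(pX lam p + p.2.2 * pU lam p + φ p * pV lam p)) • ((0, 0, 1) : R3) +
          (pU φ p + lam p * pV φ p - (lam p) ^ 2) • ((0, 0, 1) : R3) ∧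
      lieB (fun p => (0, 1, lam p)) (fun p => (1, p.2.2, φ p)) p =
        lam p • ((0, 1, lam p) : R3) := by
  intro p hp
  have hlamd : DifferentiableAt ℝ lam p :=
    (hlam.contDiffAt (hU.mem_nhds hp)).differentiableAt (by simp)
  have hφd : DifferentiableAt ℝ φ p :=
    (hφ.contDiffAt (hU.mem_nhds hp)).differentiableAt (by simp)
  have h22 : HasFDerivAt (fun q : R3 => q.2.2)
      ((ContinuousLinearMap.snd ℝ ℝ ℝ).comp (ContinuousLinearMap.snd ℝ ℝ (ℝ × ℝ))) p :=
    ((ContinuousLinearMap.snd ℝ ℝ ℝ).comp (ContinuousLinearMap.snd ℝ ℝ (ℝ × ℝ))).hasFDerivAt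
  have hYd : HasFDerivAt (fun q : R3 => ((1 : ℝ), q.2.2, φ q))
      ((0 : R3 →L[ℝ] ℝ).prod
        (((ContinuousLinearMap.snd ℝ ℝ ℝ).comp (ContinuousLinearMap.snd ℝ ℝ (ℝ × ℝ))).prod
          (fderiv ℝ φ p))) p :=
    (hasFDerivAt_const (1 : ℝ) p).prodMk (h22.prodMk hφd.hasFDerivAt)
  have hXd : HasFDerivAt (fun q : R3 => ((0 : ℝ), (1 : ℝ), lam q))
      ((0 : R3 →L[ℝ] ℝ).prod ((0 : R3 →L[ℝ] ℝ).prod (fderiv ℝ lam p))) p :=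
    (hasFDerivAt_const (0 : ℝ) p).prodMk ((hasFDerivAt_const (1 : ℝ) p).prodMk hlamd.hasFDerivAt)
  have key : lieB (fun p => (0, 1, lam p)) (fun p => (1, p.2.2, φ p)) p =
      (0, lam p,
        (pU φ p + pV φ p * lam p) - (pX lam p + pU lam p * p.2.2 + pV lam p * φ p)) := by
    simp only [lieB]
    rw [hYd.fderiv, hXd.fderiv]
    simp [ContinuousLinearMap.prod_apply, fderiv_apply_eq lam p hlamd,
      fderiv_apply_eq φ p hφd, Prod.ext_iff]
  have hd := hdet p hp
  refine ⟨?_, ?_⟩ <;> rw [key] <;>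
    · simp only [Prod.smul_mk, smul_eq_mul, Prod.mk_add_mk, Prod.ext_iff]
      refine ⟨by ring, by ring, by nlinarith [hd]⟩
end
end

section
/- On an open subset of ℝ³ with coordinates (x,u,u_1) where xu ≠ 0, let A = ∂_x + u_1∂_u - ((u_1+1)(x+u)/(xu))∂_{u_1}, X_1 = ∂_u + ((u_1+1)/u)∂_{u_1}, and V = x∂_x + u∂_u. Then [X_1, A] = ((u_1+1)/u)X_1 and [V, X_1] = -X_1; in particular V is a symmetry of the distribution S({A, X_1}). -/
noncomputable section

/-- The vector field `A` associated to the ODE `u₂ = -(u₁+1)(x+u)/(xu)`. -/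
def Aex : R3 → R3 := fun p => (1, p.2.2, -((p.2.2 + 1) * (p.1 + p.2.1)) / (p.1 * p.2.1))

/-- The λ-prolongation `X₁ = ∂_u + ((u₁+1)/u) ∂_{u₁}`. -/
def X1ex : R3 → R3 := fun p => (0, 1, (p.2.2 + 1) / p.2.1)

/-- The (prolonged) Lie point symmetry `V = x∂_x + u∂_u`. -/
def Vex : R3 → R3 := fun p => (p.1, p.2.1, 0)

lemma brackets_core (p : R3) (hp : p.1 * p.2.1 ≠ 0) :
      lieB X1ex Aex p = ((p.2.2 + 1) / p.2.1) • X1ex p ∧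
      lieB Vex X1ex p = -(X1ex p) ∧
      lieB Vex Aex p = (-1 : ℝ) • Aex p + (0:ℝ) • X1ex p := by
    have hx : p.1 ≠ 0 := left_ne_zero_of_mul hp
    have hu : p.2.1 ≠ 0 := right_ne_zero_of_mul hp
    have h1 : HasFDerivAt (fun q : R3 => q.1) (ContinuousLinearMap.fst ℝ ℝ (ℝ × ℝ)) p := hasFDerivAt_fst
    have h2 : HasFDerivAt (fun q : R3 => q.2.1)
        ((ContinuousLinearMap.fst ℝ ℝ ℝ).comp (ContinuousLinearMap.snd ℝ ℝ (ℝ × ℝ))) p :=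
      hasFDerivAt_fst.comp p hasFDerivAt_snd
    have h3 : HasFDerivAt (fun q : R3 => q.2.2)
        ((ContinuousLinearMap.snd ℝ ℝ ℝ).comp (ContinuousLinearMap.snd ℝ ℝ (ℝ × ℝ))) p :=
      hasFDerivAt_snd.comp p hasFDerivAt_snd
    have hinvA : HasFDerivAt (fun q : R3 => (q.1 * q.2.1)⁻¹) _ p :=
      (hasFDerivAt_inv' (𝕜 := ℝ) (mul_ne_zero hx hu)).comp p (h1.mul h2)
    have hinvU : HasFDerivAt (fun q : R3 => (q.2.1)⁻¹) _ p :=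
      (hasFDerivAt_inv' (𝕜 := ℝ) hu).comp p h2
    have hA3 : HasFDerivAt (fun q : R3 => -((q.2.2 + 1) * (q.1 + q.2.1)) * (q.1 * q.2.1)⁻¹) _ p :=
      (((h3.add_const 1).mul (h1.add h2)).neg).mul hinvA
    have heqA : Aex = fun q : R3 => ((1:ℝ), q.2.2, -((q.2.2 + 1) * (q.1 + q.2.1)) * (q.1 * q.2.1)⁻¹) := by
      funext q; simp [Aex, div_eq_mul_inv]
    have hA : HasFDerivAt Aex _ p :=
      heqA.symm ▸ (HasFDerivAt.prodMk (hasFDerivAt_const (1:ℝ) p) (h3.prodMk hA3))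
    have heqX : X1ex = fun q : R3 => ((0:ℝ), (1:ℝ), (q.2.2 + 1) * (q.2.1)⁻¹) := by
      funext q; simp [X1ex, div_eq_mul_inv]
    have hX : HasFDerivAt X1ex _ p :=
      heqX.symm ▸ (HasFDerivAt.prodMk (hasFDerivAt_const (0:ℝ) p) (HasFDerivAt.prodMk (hasFDerivAt_const (1:ℝ) p) ((h3.add_const 1).mul hinvU)))
    have hV : HasFDerivAt Vex _ p := HasFDerivAt.prodMk h1 (HasFDerivAt.prodMk h2 (hasFDerivAt_const (0:ℝ) p))
    refine ⟨?_, ?_, ?_⟩ <;>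
    · simp only [lieB, hA.fderiv, hX.fderiv, hV.fderiv, Aex, X1ex, Vex,
        ContinuousLinearMap.prod_apply, ContinuousLinearMap.comp_apply,
        ContinuousLinearMap.coe_fst', ContinuousLinearMap.coe_snd',
        ContinuousLinearMap.smul_apply, ContinuousLinearMap.add_apply,
        ContinuousLinearMap.sub_apply, ContinuousLinearMap.neg_apply,
        ContinuousLinearMap.mulLeftRight_apply,
        ContinuousLinearMap.zero_apply, Prod.smul_mk, Prod.mk_sub_mk, Prod.neg_mk,
        Prod.mk_add_mk, smul_eq_mul, Prod.mk.injEq, Pi.add_apply, Pi.mul_apply, Pi.neg_apply]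
      constructor
      · ring
      · field_simp
        exact ⟨by ring, by ring⟩

/-- on the open set where `xu ≠ 0` one has `[X₁, A] = ((u₁+1)/u) X₁` and
`[V, X₁] = -X₁`; in particular `V` is a symmetry of the distribution `S({A, X₁})`
(i.e. `[V, A]` is also a `C^∞`-combination of `A` and `X₁`). -/
theorem brackets_example_one_lie :
    (∀ p : R3, p.1 * p.2.1 ≠ 0 →
        lieB X1ex Aex p = ((p.2.2 + 1) / p.2.1) • X1ex p ∧
        lieB Vex X1ex p = -(X1ex p)) ∧
    ∃ a b : R3 → ℝ,
      ContDiffOn ℝ (⊤ : ℕ∞) a {p : R3 | p.1 * p.2.1 ≠ 0} ∧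
      ContDiffOn ℝ (⊤ : ℕ∞) b {p : R3 | p.1 * p.2.1 ≠ 0} ∧
      ∀ p : R3, p.1 * p.2.1 ≠ 0 → lieB Vex Aex p = a p • Aex p + b p • X1ex p := by
  refine ⟨fun p hp => ⟨(brackets_core p hp).1, (brackets_core p hp).2.1⟩,
    fun _ => -1, fun _ => 0, contDiffOn_const, contDiffOn_const,
    fun p hp => (brackets_core p hp).2.2⟩
end
end

section
/- On an open subset of ℝ³ with coordinates (x,u,u_1) where xu ≠ 0, the function I_2(x,u,u_1) = ln(x) - u/(x(1+u_1)) is a first integral of the vector field A = ∂_x + u_1∂_u - ((u_1+1)(x+u)/(xu))∂_{u_1}, i.e., A(I_2) = 0, and moreover X_1(I_2) = 0 where X_1 = ∂_u + ((u_1+1)/u)∂_{u_1}. -/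
/-! The derivative of `I₂` is computed once, in closed form; both claims are then rational
identities in `x, u, u₁`: for `X₁` the terms `-1/(x(1+u₁))` and `u/(x(1+u₁)²)·(u₁+1)/u` cancel, and
for `A` the `u/(x²(1+u₁))` term cancels against part of the `∂_{u₁}` contribution, leaving
`1/x - u₁/(x(1+u₁)) - 1/(x(1+u₁)) = 0`. -/

noncomputable section

def firstIntegral (q : R3) : ℝ := Real.log q.1 - q.2.1 / (q.1 * (1 + q.2.2))

theorem fderiv_firstIntegral_apply {q : R3} (hx : q.1 ≠ 0) (hv : 1 + q.2.2 ≠ 0) (w : R3) :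
    fderiv ℝ firstIntegral q w =
      w.1 * (1 / q.1 + q.2.1 / (q.1 ^ 2 * (1 + q.2.2))) - w.2.1 / (q.1 * (1 + q.2.2))
        + w.2.2 * q.2.1 / (q.1 * (1 + q.2.2) ^ 2) := by
  have hX : HasFDerivAt (fun q : R3 => q.1) _ q := hasFDerivAt_fst (𝕜 := ℝ)
  have hU : HasFDerivAt (fun q : R3 => q.2.1) _ q := (hasFDerivAt_snd (𝕜 := ℝ)).fst
  have hV : HasFDerivAt (fun q : R3 => q.2.2) _ q := (hasFDerivAt_snd (𝕜 := ℝ)).snd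
  have hden := (hasFDerivAt_inv (mul_ne_zero hx hv)).comp q
    (hX.mul ((hasFDerivAt_const 1 q).add hV))
  have hI : HasFDerivAt firstIntegral _ q :=
    ((hX.log hx).sub (hU.mul hden)).congr_of_eventuallyEq <|
      .of_eq <| funext fun q => by simp [firstIntegral, div_eq_mul_inv]
  rw [hI.fderiv]
  simp only [zero_add, Pi.add_apply, ContinuousLinearMap.comp_add, ContinuousLinearMap.comp_smulₛₗ,
    Real.ringHom_apply, smul_add, Function.comp_apply, Pi.mul_apply, mul_inv_rev, sub_apply, smul_apply,
    ContinuousLinearMap.coe_fst', smul_eq_mul, add_apply, ContinuousLinearMap.comp_apply,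
    ContinuousLinearMap.coe_snd', ContinuousLinearMap.toSpanSingleton_apply, mul_neg, one_div]
  field_simp
  ring

/-- on the open set where `x > 0`, `u ≠ 0`, `u₁ ≠ -1`, the function
`I₂(x,u,u₁) = ln x - u/(x(1+u₁))` is a first integral of
`A = ∂_x + u₁∂_u - ((u₁+1)(x+u)/(xu))∂_{u₁}`, and `X₁(I₂) = 0` for
`X₁ = ∂_u + ((u₁+1)/u)∂_{u₁}`. -/
theorem first_integral_example_one_lie :
    ∀ p : R3, 0 < p.1 → p.2.1 ≠ 0 → p.2.2 ≠ -1 →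
      fderiv ℝ (fun q : R3 => Real.log q.1 - q.2.1 / (q.1 * (1 + q.2.2))) p
          ((1, p.2.2, -((p.2.2 + 1) * (p.1 + p.2.1)) / (p.1 * p.2.1)) : R3) = 0 ∧
      fderiv ℝ (fun q : R3 => Real.log q.1 - q.2.1 / (q.1 * (1 + q.2.2))) p
          ((0, 1, (p.2.2 + 1) / p.2.1) : R3) = 0 := by
  intro p hx hu hv
  have hv' : 1 + p.2.2 ≠ 0 := fun h => hv (by linarith)
  show fderiv ℝ firstIntegral p _ = 0 ∧ fderiv ℝ firstIntegral p _ = 0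
  simp only [fderiv_firstIntegral_apply hx.ne' hv']
  constructor
  · field_simp
    ring
  · field_simp
    ring
end
end

section
/- On an open subset of ℝ³ with coordinates (x,u,u_1) where xu ≠ 0, the function I_2(x,u,u_1) = arctan(x(xu_1 + x² - u)/u) - 1/x is a first integral of the vector field A = ∂_x + u_1∂_u + (-(x(u_1+x))/u - u/x⁴ - 1)∂_{u_1} and of X_1 = ∂_u + ((u_1+x)/u)∂_{u_1}, i.e., A(I_2) = 0 and X_1(I_2) = 0. -/
/-! Write `I₂ = arctan w - 1/x` with `w = x(xu₁ + x² - u)/u`. Along `X₁` both `x` and `w` are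
constant. Along `A`, `A x = 1`, and with `s = x(u₁ + x)/u` one has `w = x(s - 1)` and
`A w = -(s - 1)² - 1/x² = -(1 + w²)/x²`, so `A I₂ = A w/(1 + w²) + 1/x² = 0`. -/

noncomputable section

theorem fderiv_arctan_sub_one_div_apply {E : Type*} [NormedAddCommGroup E] [NormedSpace ℝ E]
    {g φ : E → ℝ} {p : E} (hg : DifferentiableAt ℝ g p) (hφ : DifferentiableAt ℝ φ p)
    (hφ0 : φ p ≠ 0) (v : E) :
    fderiv ℝ (fun q => Real.arctan (g q) - 1 / φ q) p v =
      fderiv ℝ g p v / (1 + g p ^ 2) + fderiv ℝ φ p v / φ p ^ 2 := by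
  have h := hg.hasFDerivAt.arctan.fun_sub
    ((hasDerivAt_inv hφ0).comp_hasFDerivAt p hφ.hasFDerivAt)
  simp only [Function.comp_apply, ← one_div] at h
  rw [h.fderiv]
  simp only [sub_apply, smul_apply, smul_eq_mul]
  field_simp
  ring

namespace FirstIntegralExample

def ratio (q : R3) : ℝ := q.1 * (q.1 * q.2.2 + q.1 ^ 2 - q.2.1) / q.2.1

def fieldA (p : R3) : R3 := (1, p.2.2, -(p.1 * (p.2.2 + p.1)) / p.2.1 - p.2.1 / p.1 ^ 4 - 1)

def fieldX₁ (p : R3) : R3 := (0, 1, (p.2.2 + p.1) / p.2.1)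

variable {p : R3}

theorem differentiableAt_ratio (hu : p.2.1 ≠ 0) : DifferentiableAt ℝ ratio p := by
  unfold ratio
  fun_prop (disch := exact hu)

theorem fderiv_ratio_apply (hu : p.2.1 ≠ 0) (a b c : ℝ) :
    fderiv ℝ ratio p (a, b, c) =
      a * ((2 * p.1 * p.2.2 + 3 * p.1 ^ 2 - p.2.1) / p.2.1)
        - b * (p.1 ^ 2 * (p.2.2 + p.1) / p.2.1 ^ 2) + c * (p.1 ^ 2 / p.2.1) := by
  have dx : HasFDerivAt (𝕜 := ℝ) (fun q : R3 => q.1) _ p := hasFDerivAt_fst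
  have du : HasFDerivAt (𝕜 := ℝ) (fun q : R3 => q.2.1) _ p := hasFDerivAt_snd.fst
  have dv : HasFDerivAt (𝕜 := ℝ) (fun q : R3 => q.2.2) _ p := hasFDerivAt_snd.snd
  have h := (dx.fun_mul (((dx.fun_mul dv).fun_add (dx.pow 2)).fun_sub du)).fun_mul
    ((hasDerivAt_inv hu).comp_hasFDerivAt p du)
  simp only [Function.comp_apply, ← div_eq_mul_inv] at h
  unfold ratio
  rw [h.fderiv]
  simp only [neg_smul, smul_neg, Nat.add_one_sub_one, pow_one, nsmul_eq_mul, Nat.cast_ofNat,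
    smul_add, add_apply, neg_apply, smul_apply, ContinuousLinearMap.comp_apply,
    ContinuousLinearMap.coe_snd', ContinuousLinearMap.coe_fst', smul_eq_mul, sub_apply]
  field_simp
  ring

theorem fderiv_ratio_apply_fieldA (hx : p.1 ≠ 0) (hu : p.2.1 ≠ 0) :
    fderiv ℝ ratio p (fieldA p) = -(1 + ratio p ^ 2) / p.1 ^ 2 := by
  rw [fieldA, fderiv_ratio_apply hu, ratio]
  field_simp
  ring

theorem fderiv_ratio_apply_fieldX₁ (hu : p.2.1 ≠ 0) : fderiv ℝ ratio p (fieldX₁ p) = 0 := by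
  rw [fieldX₁, fderiv_ratio_apply hu]
  field_simp
  ring

theorem fderiv_arctan_ratio_sub_one_div_fst_apply (hx : p.1 ≠ 0) (hu : p.2.1 ≠ 0) (v : R3) :
    fderiv ℝ (fun q : R3 => Real.arctan (ratio q) - 1 / q.1) p v =
      fderiv ℝ ratio p v / (1 + ratio p ^ 2) + v.1 / p.1 ^ 2 := by
  rw [fderiv_arctan_sub_one_div_apply (differentiableAt_ratio hu) differentiableAt_fst hx,
    fderiv_fst, ContinuousLinearMap.coe_fst']

end FirstIntegralExample

open FirstIntegralExample

/-- on the open set where `x ≠ 0` and `u ≠ 0`, the function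
`I₂(x,u,u₁) = arctan(x(xu₁ + x² - u)/u) - 1/x` is a first integral of both
`A = ∂_x + u₁∂_u + (-(x(u₁+x))/u - u/x⁴ - 1)∂_{u₁}` and
`X₁ = ∂_u + ((u₁+x)/u)∂_{u₁}`. -/
theorem first_integral_example_no_lie :
    ∀ p : R3, p.1 ≠ 0 → p.2.1 ≠ 0 →
      fderiv ℝ (fun q : R3 =>
          Real.arctan (q.1 * (q.1 * q.2.2 + q.1 ^ 2 - q.2.1) / q.2.1) - 1 / q.1) p
          ((1, p.2.2, -(p.1 * (p.2.2 + p.1)) / p.2.1 - p.2.1 / p.1 ^ 4 - 1) : R3) = 0 ∧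
      fderiv ℝ (fun q : R3 =>
          Real.arctan (q.1 * (q.1 * q.2.2 + q.1 ^ 2 - q.2.1) / q.2.1) - 1 / q.1) p
          ((0, 1, (p.2.2 + p.1) / p.2.1) : R3) = 0 := by
  intro p hx hu
  have hw : 1 + ratio p ^ 2 ≠ 0 := by positivity
  constructor
  · change fderiv ℝ (fun q : R3 => Real.arctan (ratio q) - 1 / q.1) p (fieldA p) = 0
    rw [fderiv_arctan_ratio_sub_one_div_fst_apply hx hu, fderiv_ratio_apply_fieldA hx hu, fieldA]
    field_simp
    ring
  · change fderiv ℝ (fun q : R3 => Real.arctan (ratio q) - 1 / q.1) p (fieldX₁ p) = 0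
    rw [fderiv_arctan_ratio_sub_one_div_fst_apply hx hu, fderiv_ratio_apply_fieldX₁ hu, fieldX₁]
    simp
end
end

section
/- On an open subset of ℝ³ with coordinates (t,x,y) where t ≠ 0 and t - tan(t) ≠ 0, let A = ∂_t + ((ty + x - 2y·tan t)/(t - tan t))∂_x + ((x + (tx - t²y - y)tan t)/(t² - t·tan t))∂_y and X_1 = ∂_x + (1/t)∂_y. Then the function I_2(t,x,y) = (yt - x)/(t·cos t - sin t) satisfies A(I_2) = 0 and X_1(I_2) = 0. -/
noncomputable section

/-- The vector field associated to the system
`dx/dt = (ty + x - 2y·tan t)/(t - tan t)`,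
`dy/dt = (x + (tx - t²y - y)·tan t)/(t² - t·tan t)`. -/
def Asys (p : R3) : R3 :=
  (1,
   (p.1 * p.2.2 + p.2.1 - 2 * p.2.2 * Real.tan p.1) / (p.1 - Real.tan p.1),
   (p.2.1 + (p.1 * p.2.1 - p.1 ^ 2 * p.2.2 - p.2.2) * Real.tan p.1) /
     (p.1 ^ 2 - p.1 * Real.tan p.1))

/-- `X₁ = ∂_x + (1/t)∂_y`. -/
def X1sys (p : R3) : R3 := (0, 1, 1 / p.1)

/-- `I₂ = (yt - x)/(t·cos t - sin t)`. -/
def I2sys (p : R3) : ℝ := (p.2.2 * p.1 - p.2.1) / (p.1 * Real.cos p.1 - Real.sin p.1)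

/-!
Write `I₂ = N / D` with `N = y t - x` and `D = t cos t - sin t`, so that `D' = -t sin t`.
`X₁` annihilates both `N` and `D`. Along `A`, once `tan t = sin t / cos t` is cleared,
`A(N) = -t sin t · N / D = A(D) · N / D`, which is exactly `A(N / D) = 0`.
-/

open Real

theorem hasDerivAt_mul_cos_sub_sin (t : ℝ) :
    HasDerivAt (fun s => s * cos s - sin s) (-(t * sin t)) t :=
  (((hasDerivAt_id' t).fun_mul (hasDerivAt_cos t)).fun_sub (hasDerivAt_sin t)).congr_deriv
    (by ring)

theorem fderiv_I2sys_apply {p : R3} (hD : p.1 * cos p.1 - sin p.1 ≠ 0) (v : R3) :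
    fderiv ℝ I2sys p v =
      ((v.2.2 * p.1 + p.2.2 * v.1 - v.2.1) * (p.1 * cos p.1 - sin p.1)
        + (p.2.2 * p.1 - p.2.1) * (p.1 * sin p.1 * v.1)) / (p.1 * cos p.1 - sin p.1) ^ 2 := by
  have hN : HasFDerivAt (fun q : R3 => q.2.2 * q.1 - q.2.1) _ p :=
    ((hasFDerivAt_snd (𝕜 := ℝ) (p := p)).snd.fun_mul hasFDerivAt_fst).fun_sub
      (hasFDerivAt_snd (𝕜 := ℝ) (p := p)).fst
  have hDinv : HasFDerivAt (fun q : R3 => (q.1 * cos q.1 - sin q.1)⁻¹) _ p :=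
    ((hasDerivAt_mul_cos_sub_sin p.1).fun_inv hD).hasFDerivAt.comp p hasFDerivAt_fst
  have hI : I2sys = fun q => (q.2.2 * q.1 - q.2.1) * (q.1 * cos q.1 - sin q.1)⁻¹ :=
    funext fun q => div_eq_mul_inv _ _
  rw [hI, (hN.fun_mul hDinv).fderiv]
  simp only [neg_neg, add_apply, sub_apply,
    smul_apply, ContinuousLinearMap.comp_apply,
    ContinuousLinearMap.coe_fst', ContinuousLinearMap.coe_snd',
    ContinuousLinearMap.toSpanSingleton_apply, smul_eq_mul]
  field_simp
  ring

theorem fderiv_I2sys_X1sys {p : R3} (ht : p.1 ≠ 0) (hD : p.1 * cos p.1 - sin p.1 ≠ 0) :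
    fderiv ℝ I2sys p (X1sys p) = 0 := by
  rw [fderiv_I2sys_apply hD]
  simp [X1sys, ht]

theorem Asys_rate_yt_sub_x {p : R3} (ht : p.1 ≠ 0) (hc : cos p.1 ≠ 0)
    (hD : p.1 * cos p.1 - sin p.1 ≠ 0) :
    p.1 * (Asys p).2.2 + p.2.2 - (Asys p).2.1 =
      -(p.1 * sin p.1 * (p.2.2 * p.1 - p.2.1)) / (p.1 * cos p.1 - sin p.1) := by
  simp only [Asys, tan_eq_sin_div_cos]
  field_simp
  ring

theorem fderiv_I2sys_Asys {p : R3} (ht : p.1 ≠ 0) (hc : cos p.1 ≠ 0)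
    (hD : p.1 * cos p.1 - sin p.1 ≠ 0) :
    fderiv ℝ I2sys p (Asys p) = 0 := by
  rw [fderiv_I2sys_apply hD, div_eq_zero_iff]
  left
  calc _ = (p.1 * (Asys p).2.2 + p.2.2 - (Asys p).2.1) * (p.1 * cos p.1 - sin p.1)
        + (p.2.2 * p.1 - p.2.1) * (p.1 * sin p.1) := by simp only [Asys]; ring
    _ = 0 := by rw [Asys_rate_yt_sub_x ht hc hD]; field_simp; ring

/-- on the open set where `t ≠ 0`, `t - tan t ≠ 0`, `t·cos t - sin t ≠ 0` and
`cos t ≠ 0`, the function `I₂ = (yt - x)/(t·cos t - sin t)` satisfies `A(I₂) = 0` and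
`X₁(I₂) = 0`. -/
theorem first_integral_system :
    ∀ p : R3, p.1 ≠ 0 → p.1 - Real.tan p.1 ≠ 0 →
      p.1 * Real.cos p.1 - Real.sin p.1 ≠ 0 → Real.cos p.1 ≠ 0 →
      fderiv ℝ I2sys p (Asys p) = 0 ∧ fderiv ℝ I2sys p (X1sys p) = 0 :=
  fun _ ht _ hD hc => ⟨fderiv_I2sys_Asys ht hc hD, fderiv_I2sys_X1sys ht hD⟩
end
end
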